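/- arXiv:1204.5371 — 2 statements merged into one kernel-verified Lean document; each statement's English description precedes it below -/
import Mathlib

section
/- There exists a subshift X ⊂ Σ^ℤ (over a suitable finite alphabet) whose Besicovitch projection X̃ = { y : d_B(y, X) = 0 } is not closed in the Besicovitch topology: there is a point y with d_B(y, X̃) = 0 but y ∉ X̃. -/
open Filter

/-- Hamming distance between `x` and `y` on the coordinate interval `[a, b]`. -/
noncomputable def hamIcc {A : Type*} (x y : ℤ → A) (a b : ℤ) : ℕ :=
  @Finset.card ℤ (@Finset.filter ℤ (fun i => x i ≠ y i) (Classical.decPred _) (Finset.Icc a b))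

/-- The Besicovitch pseudodistance on `A^ℤ`. -/
noncomputable def dB {A : Type*} (x y : ℤ → A) : ℝ :=
  atTop.limsup fun n : ℕ => (hamIcc x y (-(n : ℤ)) n : ℝ) / (2 * n + 1)

/-- The Weyl pseudodistance on `A^ℤ`. -/
noncomputable def dW {A : Type*} (x y : ℤ → A) : ℝ :=
  atTop.limsup fun n : ℕ => ⨆ m : ℤ, (hamIcc x y (m - n) (m + n) : ℝ) / (2 * n + 1)

/-- The shift map. -/
def shiftMap {A : Type*} (x : ℤ → A) : ℤ → A := fun i => x (i + 1)

/-- A subshift: a shift-invariant subset of `A^ℤ` closed in the Cantor topology. -/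
def IsSubshift {A : Type*} (X : Set (ℤ → A)) : Prop :=
  (∀ x ∈ X, shiftMap x ∈ X) ∧ (∀ x ∈ X, (fun i => x (i - 1)) ∈ X) ∧
  (∀ x : ℤ → A, (∀ n : ℕ, ∃ y ∈ X, ∀ i : ℤ, |i| ≤ (n : ℤ) → y i = x i) → x ∈ X)

/-- The word `w` occurs in (some point of) `X`. -/
def occursIn {A : Type*} (X : Set (ℤ → A)) {k : ℕ} (w : Fin k → A) : Prop :=
  ∃ x ∈ X, ∃ i : ℤ, ∀ j : Fin k, x (i + j) = w j

/-- A shift of finite type: defined by a clopen window condition. -/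
def IsSFT {A : Type*} (X : Set (ℤ → A)) : Prop :=
  ∃ (k : ℕ) (P : (Fin k → A) → Prop), X = {x | ∀ i : ℤ, P (fun j => x (i + j))}

/-- A sliding block code (cellular automaton when `A = B`) of some radius `r`. -/
def IsSlidingBlock {A B : Type*} (φ : (ℤ → A) → (ℤ → B)) : Prop :=
  ∃ (r : ℕ) (f : (Fin (2 * r + 1) → A) → B), ∀ x i, φ x i = f fun j => x (i - r + j)

/-- A sofic shift: the image of an SFT under a sliding block code. -/
def IsSofic {A : Type*} (X : Set (ℤ → A)) : Prop :=
  ∃ (B : Type) (_ : Fintype B) (Y : Set (ℤ → B)) (φ : (ℤ → B) → (ℤ → A)),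
    IsSFT Y ∧ IsSlidingBlock φ ∧ X = φ '' Y

/-- Topological mixing for shift spaces, in terms of words of the language. -/
def IsMixingShift {A : Type*} (X : Set (ℤ → A)) : Prop :=
  ∀ (k l : ℕ) (u : Fin k → A) (v : Fin l → A), occursIn X u → occursIn X v →
    ∃ N : ℕ, ∀ n ≥ N, ∃ x ∈ X, ∃ i : ℤ,
      (∀ j : Fin k, x (i + j) = u j) ∧ (∀ j : Fin l, x (i + k + n + j) = v j)

/-- Topological entropy of a shift space. -/
noncomputable def shiftEntropy {A : Type*} (X : Set (ℤ → A)) : ℝ :=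
  atTop.limsup fun n : ℕ => Real.log (Set.ncard {w : Fin n → A | occursIn X w}) / n

/-- The periodic configuration `∞w∞` with period word `w`. -/
def perPt {A : Type*} {n : ℕ} (hn : 0 < n) (w : Fin n → A) : ℤ → A := fun i =>
  w ⟨(i % (n : ℤ)).toNat, by
    have h1 : (0 : ℤ) < (n : ℤ) := by exact_mod_cast hn
    have h2 := Int.emod_nonneg i (by omega : (n : ℤ) ≠ 0)
    have h3 := Int.emod_lt_of_pos i h1
    omega⟩

/-- The density coding `U' : [0,1] → {0,1}^ℕ`: the dyadic interval of `ℕ` containing `n`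
has left endpoint `2^(Nat.log 2 (n+1)) - 1` and length `L = 2^(Nat.log 2 (n+1))`; it is
filled with `⌊x·L⌋` zeros (`false`) followed by ones (`true`). -/
noncomputable def Uprime (x : ℝ) (n : ℕ) : Bool :=
  decide (⌊x * 2 ^ Nat.log 2 (n + 1)⌋ ≤ ((n : ℤ) + 1 - 2 ^ Nat.log 2 (n + 1)))

/-- The two-sided version `T'(x) = U'(x)^R.U'(x)`. -/
noncomputable def Tprime (x : ℝ) : ℤ → Bool := fun i =>
  if 0 ≤ i then Uprime x i.toNat else Uprime x (-i - 1).toNat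

/-- The one-sided Besicovitch pseudodistance. -/
noncomputable def dB1 {A : Type*} (u v : ℕ → A) : ℝ :=
  atTop.limsup fun n : ℕ =>
    ((@Finset.filter ℕ (fun i => u i ≠ v i) (Classical.decPred _) (Finset.range n)).card : ℝ) / n

/-!
The subshift is the orbit closure of the points `∞a b^m c^n w(m/n)`. A point of it containing
both an `a` and a binary digit is rigid: its marker `a b^m c^n` determines it, so it is a
translate of a generator and carries the digits `w(r)` of a rational `r`, shifted. Among its
first `2^J - 1` letters `w(β)` has `(1 - β)(2^J - 1) + O(J)` ones, and a bounded shift changes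
such counts boundedly, so that point stays at positive distance from `y = ∞a.w(α)` for an
irrational `α`. A point with no `a` at negative places, or no digit at nonnegative ones, differs
from `y` on a half-line. Conversely, for `r ≤ α` the codings `w(r)` and `w(α)` differ in at most
`2(α - r)N + O(log N)` of their first `N` places, so translated generators with `m/n` close to
`α` approach `y`.
-/
open Finset Topology

section Besicovitch

variable {A : Type*}

lemma hamIcc_eq_card_filter [DecidableEq A] (x y : ℤ → A) (a b : ℤ) :
    hamIcc x y a b = ((Icc a b).filter fun i => x i ≠ y i).card := by
  unfold hamIcc
  congr 1
  exact filter_congr_decidable _ _ _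

lemma hamIcc_le (x y : ℤ → A) (n : ℕ) : hamIcc x y (-n) n ≤ 2 * n + 1 := by
  classical
  rw [hamIcc_eq_card_filter]
  refine (card_filter_le _ _).trans ?_
  rw [Int.card_Icc]
  omega

lemma card_le_hamIcc [DecidableEq A] {x y : ℤ → A} {a b : ℤ} {s : Finset ℤ}
    (hs : s ⊆ Icc a b) (h : ∀ i ∈ s, x i ≠ y i) : s.card ≤ hamIcc x y a b := by
  rw [hamIcc_eq_card_filter]
  exact card_le_card fun i hi => mem_filter.2 ⟨hs hi, h i hi⟩

lemma le_dB_of_frequently_le {x y : ℤ → A} {c : ℝ}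
    (h : ∃ᶠ n : ℕ in atTop, c ≤ (hamIcc x y (-n) n : ℝ) / (2 * n + 1)) : c ≤ dB x y :=
  le_limsup_of_frequently_le h <| isBoundedUnder_of
    ⟨1, fun n => (div_le_one (by positivity)).2 (by exact_mod_cast hamIcc_le x y n)⟩

lemma dB_le_of_eventually_le {x y : ℤ → A} {c : ℝ}
    (h : ∀ᶠ n : ℕ in atTop, (hamIcc x y (-n) n : ℝ) / (2 * n + 1) ≤ c) : dB x y ≤ c :=
  limsup_le_of_le (isCoboundedUnder_le_of_le atTop fun _ => by positivity) h

lemma dB_self (x : ℤ → A) : dB x x = 0 := by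
  classical
  simp [dB, hamIcc_eq_card_filter]

lemma one_third_le_dB {x y : ℤ → A} (h : ∀ n : ℕ, n ≤ hamIcc x y (-n) n) : 1 / 3 ≤ dB x y := by
  refine le_dB_of_frequently_le (Eventually.frequently ?_)
  filter_upwards [eventually_ge_atTop 1] with n hn
  have h1 : (n : ℝ) ≤ hamIcc x y (-n) n := by exact_mod_cast h n
  have h2 : (1 : ℝ) ≤ n := by exact_mod_cast hn
  rw [le_div_iff₀ (by positivity)]
  linarith

lemma card_filter_eq_le_add [DecidableEq A] (x y : ℤ → A) (o : A) (s : Finset ℤ) :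
    (s.filter fun i => x i = o).card ≤
      (s.filter fun i => y i = o).card + (s.filter fun i => x i ≠ y i).card := by
  refine (card_le_card fun i hi => ?_).trans (card_union_le _ _)
  simp only [mem_filter, mem_union] at hi ⊢
  by_cases hy : y i = o
  · exact Or.inl ⟨hi.1, hy⟩
  · exact Or.inr ⟨hi.1, fun h => hy (h ▸ hi.2)⟩

lemma abs_card_filter_eq_sub_le_hamIcc [DecidableEq A] (x y : ℤ → A) (o : A) (a b : ℤ) :
    |(((Icc a b).filter fun i => x i = o).card : ℝ) - ((Icc a b).filter fun i => y i = o).card|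
      ≤ hamIcc x y a b := by
  have hxy := card_filter_eq_le_add x y o (Icc a b)
  have hyx := card_filter_eq_le_add y x o (Icc a b)
  simp_rw [ne_comm (a := y _)] at hyx
  rw [hamIcc_eq_card_filter, abs_sub_le_iff, sub_le_iff_le_add', sub_le_iff_le_add']
  exact ⟨by exact_mod_cast hxy, by exact_mod_cast hyx⟩

lemma card_filter_Icc_eq_card_filter_range [DecidableEq A] {x : ℤ → A} {o : A} {f : ℕ → Bool}
    {p : ℤ} (hx : ∀ i, x i = o ↔ p ≤ i ∧ f (i - p).toNat = true) {a b : ℤ} (hp : a ≤ p) :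
    ((Icc a b).filter fun i => x i = o).card =
      ((range (b + 1 - p).toNat).filter fun k => f k = true).card := by
  refine card_nbij' (fun i => (i - p).toNat) (fun k => p + k) ?_ ?_ ?_ ?_
  · intro i hi
    simp only [coe_filter, mem_Icc, Set.mem_ofPred_eq, mem_range, hx] at hi ⊢
    exact ⟨by omega, hi.2.2⟩
  · intro k hk
    simp only [coe_filter, mem_Icc, Set.mem_ofPred_eq, mem_range, hx] at hk ⊢
    exact ⟨⟨by omega, by omega⟩, by omega, by simpa using hk.2⟩
  · intro i hi
    simp only [coe_filter, mem_Icc, Set.mem_ofPred_eq, hx] at hi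
    simp only
    omega
  · intro k _
    simp

end Besicovitch

section Uprime

lemma Uprime_eq_true_iff {β : ℝ} (hβ : 0 ≤ β) (i : ℕ) :
    Uprime β i = true ↔ ⌊β * 2 ^ Nat.log 2 (i + 1)⌋₊ + 2 ^ Nat.log 2 (i + 1) ≤ i + 1 := by
  have hpow : (2 : ℤ) ^ Nat.log 2 (i + 1) = ((2 ^ Nat.log 2 (i + 1) : ℕ) : ℤ) := by norm_cast
  rw [Uprime, decide_eq_true_iff, ← Int.natCast_floor_eq_floor (by positivity), hpow]
  omega

lemma Uprime_of_le {β γ : ℝ} (hβ : 0 ≤ β) (hβγ : β ≤ γ) {i : ℕ} (h : Uprime γ i = true) :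
    Uprime β i = true := by
  rw [Uprime_eq_true_iff (hβ.trans hβγ)] at h
  rw [Uprime_eq_true_iff hβ]
  have : ⌊β * 2 ^ Nat.log 2 (i + 1)⌋₊ ≤ ⌊γ * 2 ^ Nat.log 2 (i + 1)⌋₊ :=
    Nat.floor_le_floor (by gcongr)
  omega

lemma Uprime_eq_false_of_one_le {β : ℝ} (hβ : 1 ≤ β) (i : ℕ) : Uprime β i = false := by
  rw [Bool.eq_false_iff, Ne, Uprime_eq_true_iff (zero_le_one.trans hβ)]
  set L := Nat.log 2 (i + 1)
  have hlt : i + 1 < 2 ^ (L + 1) := Nat.lt_pow_succ_log_self one_lt_two _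
  have hle : 2 ^ L ≤ ⌊β * 2 ^ L⌋₊ :=
    Nat.le_floor (by push_cast; nlinarith [pow_pos (two_pos (α := ℝ)) L])
  rw [pow_succ] at hlt
  omega

lemma Uprime_min_one (β : ℝ) : Uprime (min β 1) = Uprime β := by
  rcases le_total β 1 with h | h
  · rw [min_eq_left h]
  · funext i
    rw [min_eq_right h, Uprime_eq_false_of_one_le le_rfl, Uprime_eq_false_of_one_le h]

noncomputable def onesCount (β : ℝ) (N : ℕ) : ℕ :=
  ((range N).filter fun i => Uprime β i = true).card

lemma card_filter_Uprime_Ico {β : ℝ} (hβ : 0 ≤ β) (j : ℕ) :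
    ((Ico (2 ^ j - 1) (2 ^ (j + 1) - 1)).filter fun i => Uprime β i = true).card =
      2 ^ j - ⌊β * 2 ^ j⌋₊ := by
  have h2 := pow_succ 2 j
  have h1 := Nat.one_le_two_pow (n := j)
  have hblock : ∀ i ∈ Ico (2 ^ j - 1) (2 ^ (j + 1) - 1), Nat.log 2 (i + 1) = j := fun i hi =>
    Nat.log_eq_of_pow_le_of_lt_pow (by simp at hi; omega) (by simp at hi; omega)
  have hfilter : ((Ico (2 ^ j - 1) (2 ^ (j + 1) - 1)).filter fun i => Uprime β i = true) =
      Ico (2 ^ j - 1 + ⌊β * 2 ^ j⌋₊) (2 ^ (j + 1) - 1) := by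
    ext i
    constructor
    · intro hi
      have hj := hblock i (mem_filter.1 hi).1
      simp only [mem_filter, mem_Ico, Uprime_eq_true_iff hβ, hj] at hi ⊢
      omega
    · intro hi
      simp only [mem_Ico] at hi
      have hj := hblock i (by simp; omega)
      simp only [mem_filter, mem_Ico, Uprime_eq_true_iff hβ, hj]
      omega
  rw [hfilter, Nat.card_Ico]
  omega

lemma onesCount_add_card_filter_Ico (β : ℝ) {M N : ℕ} (h : M ≤ N) :
    onesCount β M + ((Ico M N).filter fun i => Uprime β i = true).card = onesCount β N := by
  simp only [onesCount, card_filter]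
  exact sum_range_add_sum_Ico _ h

lemma onesCount_mono (β : ℝ) : Monotone (onesCount β) := fun _ _ h =>
  card_le_card (filter_subset_filter _ (range_subset_range.2 h))

lemma abs_onesCount_sub_le (β : ℝ) (M N : ℕ) :
    |(onesCount β M : ℝ) - onesCount β N| ≤ |(M : ℝ) - N| := by
  wlog h : M ≤ N generalizing M N
  · rw [abs_sub_comm, abs_sub_comm (M : ℝ)]
    exact this N M (by omega)
  have hsplit := onesCount_add_card_filter_Ico β h
  have hle : ((Ico M N).filter fun i => Uprime β i = true).card ≤ N - M :=
    (card_filter_le _ _).trans (Nat.card_Ico M N).le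
  have hmono : (onesCount β M : ℝ) ≤ onesCount β N := by exact_mod_cast onesCount_mono β h
  have hcast : (N : ℝ) - M = ((N - M : ℕ) : ℝ) := by push_cast [h]; ring
  rw [abs_sub_comm, abs_of_nonneg (by linarith), abs_sub_comm, abs_of_nonneg (by linarith), hcast]
  rw [← hsplit]
  push_cast
  linarith [(Nat.cast_le (α := ℝ)).2 hle]

lemma onesCount_two_pow_sub_one_add {β : ℝ} (hβ0 : 0 ≤ β) (hβ1 : β ≤ 1) (J : ℕ) :
    onesCount β (2 ^ J - 1) + ∑ j ∈ range J, ⌊β * 2 ^ j⌋₊ = 2 ^ J - 1 := by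
  induction J with
  | zero => simp [onesCount]
  | succ J ih =>
    have hfloor : ⌊β * 2 ^ J⌋₊ ≤ 2 ^ J :=
      Nat.floor_le_of_le (by push_cast; nlinarith [pow_pos (two_pos (α := ℝ)) J])
    have h2 := pow_succ 2 J
    have h1 := Nat.one_le_two_pow (n := J)
    rw [← onesCount_add_card_filter_Ico β (by omega : 2 ^ J - 1 ≤ 2 ^ (J + 1) - 1),
      card_filter_Uprime_Ico hβ0, sum_range_succ]
    omega

lemma onesCount_two_pow_sub_one_bounds {β : ℝ} (hβ0 : 0 ≤ β) (hβ1 : β ≤ 1) (J : ℕ) :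
    (1 - β) * (2 ^ J - 1) ≤ onesCount β (2 ^ J - 1) ∧
      (onesCount β (2 ^ J - 1) : ℝ) ≤ (1 - β) * (2 ^ J - 1) + J := by
  have hcount : (onesCount β (2 ^ J - 1) : ℝ) + ∑ j ∈ range J, (⌊β * 2 ^ j⌋₊ : ℝ) = 2 ^ J - 1 := by
    have := Nat.one_le_two_pow (n := J)
    exact_mod_cast onesCount_two_pow_sub_one_add hβ0 hβ1 J
  have hgeom : ∑ j ∈ range J, β * 2 ^ j = β * (2 ^ J - 1) := by
    rw [← mul_sum, ← geom_sum_mul]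
    norm_num
  have hlo : ∑ j ∈ range J, (⌊β * 2 ^ j⌋₊ : ℝ) ≤ ∑ j ∈ range J, β * 2 ^ j :=
    sum_le_sum fun j _ => Nat.floor_le (by positivity)
  have hhi : ∑ j ∈ range J, β * 2 ^ j ≤ ∑ j ∈ range J, ((⌊β * 2 ^ j⌋₊ : ℝ) + 1) :=
    sum_le_sum fun j _ => (Nat.lt_floor_add_one _).le
  rw [sum_add_distrib, sum_const, card_range, nsmul_one] at hhi
  constructor <;> linarith

lemma le_abs_onesCount_sub_onesCount {β γ : ℝ} (hβ0 : 0 ≤ β) (hβ1 : β ≤ 1) (hγ0 : 0 ≤ γ)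
    (hγ1 : γ ≤ 1) (J : ℕ) :
    |β - γ| * (2 ^ J - 1) - J ≤ |(onesCount β (2 ^ J - 1) : ℝ) - onesCount γ (2 ^ J - 1)| := by
  obtain ⟨hβlo, hβhi⟩ := onesCount_two_pow_sub_one_bounds hβ0 hβ1 J
  obtain ⟨hγlo, hγhi⟩ := onesCount_two_pow_sub_one_bounds hγ0 hγ1 J
  rcases le_total β γ with h | h
  · calc |β - γ| * (2 ^ J - 1) - J
        ≤ (onesCount β (2 ^ J - 1) : ℝ) - onesCount γ (2 ^ J - 1) := by
          rw [abs_sub_comm, abs_of_nonneg (sub_nonneg.2 h)]; linarith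
      _ ≤ _ := le_abs_self _
  · calc |β - γ| * (2 ^ J - 1) - J
        ≤ (onesCount γ (2 ^ J - 1) : ℝ) - onesCount β (2 ^ J - 1) := by
          rw [abs_of_nonneg (sub_nonneg.2 h)]; linarith
      _ ≤ _ := by rw [abs_sub_comm]; exact le_abs_self _

lemma card_Uprime_ne_add_onesCount {β γ : ℝ} (hβ : 0 ≤ β) (hβγ : β ≤ γ) (N : ℕ) :
    ((range N).filter fun i => Uprime β i ≠ Uprime γ i).card + onesCount γ N = onesCount β N := by
  have hsub : ((range N).filter fun i => Uprime γ i = true) ⊆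
      (range N).filter fun i => Uprime β i = true :=
    fun i hi => by
      simp only [mem_filter] at hi ⊢
      exact ⟨hi.1, Uprime_of_le hβ hβγ hi.2⟩
  rw [onesCount, onesCount, ← card_sdiff_add_card_eq_card hsub]
  congr 2
  ext i
  simp only [mem_filter, Finset.mem_sdiff]
  have := @Uprime_of_le β γ hβ hβγ i
  by_cases hb : Uprime β i = true <;> by_cases hg : Uprime γ i = true <;> simp_all

lemma card_Uprime_ne_le {β γ : ℝ} (hβ : 0 ≤ β) (hβγ : β ≤ γ) (hγ : γ ≤ 1) {N : ℕ} (hN : N ≠ 0) :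
    (((range N).filter fun i => Uprime β i ≠ Uprime γ i).card : ℝ) ≤
      (γ - β) * (2 * N) + (Nat.log 2 N + 1) := by
  have hNL : N < 2 ^ (Nat.log 2 N + 1) := Nat.lt_pow_succ_log_self one_lt_two N
  set L := Nat.log 2 N + 1
  have hLN : (2 : ℝ) ^ L ≤ 2 * N := by
    have := Nat.pow_log_le_self 2 hN
    exact_mod_cast (show 2 ^ (Nat.log 2 N + 1) ≤ 2 * N by rw [pow_succ]; omega)
  have hmono : ((range N).filter fun i => Uprime β i ≠ Uprime γ i).card ≤
      ((range (2 ^ L - 1)).filter fun i => Uprime β i ≠ Uprime γ i).card :=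
    card_le_card (filter_subset_filter _ (range_subset_range.2 (by omega)))
  have hE := card_Uprime_ne_add_onesCount hβ hβγ (2 ^ L - 1)
  have hβhi := (onesCount_two_pow_sub_one_bounds hβ (hβγ.trans hγ) L).2
  have hγlo := (onesCount_two_pow_sub_one_bounds (hβ.trans hβγ) hγ L).1
  have hE' : (((range (2 ^ L - 1)).filter fun i => Uprime β i ≠ Uprime γ i).card : ℝ) +
      onesCount γ (2 ^ L - 1) = onesCount β (2 ^ L - 1) := by exact_mod_cast hE
  have hmono' := (Nat.cast_le (α := ℝ)).2 hmono
  have hLcast : (L : ℝ) = Nat.log 2 N + 1 := by push_cast [L]; ring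
  have := mul_le_mul_of_nonneg_left (show (2 : ℝ) ^ L - 1 ≤ 2 * N by linarith) (sub_nonneg.2 hβγ)
  linarith

lemma eventually_add_le_mul_two_pow (C : ℝ) {δ : ℝ} (hδ : 0 < δ) :
    ∀ᶠ J : ℕ in atTop, J + C ≤ δ * 2 ^ J := by
  have hlin := tendsto_pow_const_div_const_pow_of_one_lt 1 one_lt_two
  have hconst : Tendsto (fun J : ℕ => C / (2 : ℝ) ^ J) atTop (𝓝 0) :=
    tendsto_const_nhds.div_atTop (tendsto_pow_atTop_atTop_of_one_lt one_lt_two)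
  filter_upwards [(hlin.add hconst).eventually_lt_const (by simpa using hδ)] with J hJ
  rw [pow_one, ← add_div, div_lt_iff₀ (by positivity)] at hJ
  exact hJ.le

lemma eventually_add_natLog_le_mul (C : ℝ) {δ : ℝ} (hδ : 0 < δ) :
    ∀ᶠ N : ℕ in atTop, C + Nat.log 2 N ≤ δ * N := by
  obtain ⟨J₀, hJ₀⟩ := eventually_atTop.1 (eventually_add_le_mul_two_pow C hδ)
  filter_upwards [eventually_ge_atTop (2 ^ J₀)] with N hN
  have hN0 : N ≠ 0 := by have := Nat.one_le_two_pow (n := J₀); omega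
  have hpow : ((2 ^ Nat.log 2 N : ℕ) : ℝ) ≤ N := by exact_mod_cast Nat.pow_log_le_self 2 hN0
  have := hJ₀ _ (Nat.le_log_of_pow_le one_lt_two hN)
  push_cast at hpow
  nlinarith

end Uprime

section Estimates

variable {A : Type*}

lemma hamIcc_le_add_card_filter_range [DecidableEq A] {x y : ℤ → A} {K : ℕ} {P : ℕ → Prop}
    [DecidablePred P] (hneg : ∀ i < -(K : ℤ), x i = y i)
    (hnonneg : ∀ i : ℤ, 0 ≤ i → x i ≠ y i → P i.toNat) (n : ℕ) :
    hamIcc x y (-n) n ≤ K + ((range (n + 1)).filter P).card := by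
  rw [hamIcc_eq_card_filter]
  calc _ ≤ (Icc (-(K : ℤ)) (-1) ∪ ((range (n + 1)).filter P).map Nat.castEmbedding).card := by
        refine card_le_card fun i hi => ?_
        simp only [mem_filter, mem_Icc, mem_union, Finset.mem_map, mem_range,
          Nat.castEmbedding_apply] at hi ⊢
        obtain ⟨⟨h1, h2⟩, h3⟩ := hi
        rcases lt_or_ge i 0 with h | h
        · exact Or.inl ⟨not_lt.1 fun h' => h3 (hneg i h'), by omega⟩
        · exact Or.inr ⟨i.toNat, ⟨by omega, hnonneg i h h3⟩, by omega⟩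
    _ ≤ _ := (card_union_le _ _).trans (by rw [card_map, Int.card_Icc]; omega)

lemma dB_le_sub_of_Uprime {x y : ℤ → A} {β γ : ℝ} (hβ : 0 ≤ β) (hβγ : β ≤ γ) (hγ : γ ≤ 1)
    (K : ℕ) (hneg : ∀ i < -(K : ℤ), x i = y i)
    (hnonneg : ∀ i : ℤ, 0 ≤ i → x i ≠ y i → Uprime β i.toNat ≠ Uprime γ i.toNat) :
    dB x y ≤ γ - β := by
  classical
  refine le_of_forall_pos_le_add fun δ hδ => dB_le_of_eventually_le ?_
  filter_upwards [(tendsto_add_atTop_nat 1).eventually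
    (eventually_add_natLog_le_mul (K + 2) hδ)] with n hn
  have hham : (hamIcc x y (-n) n : ℝ) ≤
      K + ((γ - β) * (2 * (n + 1 : ℕ)) + (Nat.log 2 (n + 1) + 1)) := by
    refine (Nat.cast_le.2 (hamIcc_le_add_card_filter_range
      (P := fun k => Uprime β k ≠ Uprime γ k) hneg hnonneg n)).trans ?_
    push_cast
    gcongr
    exact_mod_cast card_Uprime_ne_le hβ hβγ hγ n.succ_ne_zero
  rw [div_le_iff₀ (by positivity)]
  push_cast at hham hn
  nlinarith

lemma abs_onesCount_sub_le_hamIcc [DecidableEq A] {x y : ℤ → A} {o : A} {β γ : ℝ} {p q : ℤ}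
    (hx : ∀ i, x i = o ↔ p ≤ i ∧ Uprime β (i - p).toNat = true)
    (hy : ∀ i, y i = o ↔ q ≤ i ∧ Uprime γ (i - q).toNat = true) {n : ℕ}
    (hp : -(n : ℤ) ≤ p) (hq : -(n : ℤ) ≤ q) :
    |(onesCount β (n + 1 - p).toNat : ℝ) - onesCount γ (n + 1 - q).toNat| ≤
      hamIcc x y (-n) n := by
  rw [onesCount, onesCount, ← card_filter_Icc_eq_card_filter_range hx hp,
    ← card_filter_Icc_eq_card_filter_range hy hq]
  exact abs_card_filter_eq_sub_le_hamIcc x y o _ _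

lemma abs_onesCount_toNat_sub_le (β : ℝ) {E : ℕ} {r : ℤ} (hr : r ≤ E) :
    |(onesCount β ((E : ℤ) - r).toNat : ℝ) - onesCount β E| ≤ r.natAbs := by
  refine (abs_onesCount_sub_le β _ _).trans_eq ?_
  have : ((((E : ℤ) - r).toNat : ℕ) : ℤ) - (E : ℤ) = -r := by omega
  rw [← Int.cast_natCast, ← Int.cast_natCast (R := ℝ) E, ← Int.cast_sub, this, Int.cast_neg,
    abs_neg, Nat.cast_natAbs, Int.cast_abs]

lemma dB_pos_of_Uprime {x y : ℤ → A} {o : A} {β γ : ℝ} (hβ0 : 0 ≤ β) (hβ1 : β ≤ 1)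
    (hγ0 : 0 ≤ γ) (hγ1 : γ ≤ 1) (hβγ : β ≠ γ) {p q : ℤ}
    (hx : ∀ i, x i = o ↔ p ≤ i ∧ Uprime β (i - p).toNat = true)
    (hy : ∀ i, y i = o ↔ q ≤ i ∧ Uprime γ (i - q).toNat = true) :
    0 < dB x y := by
  classical
  set δ := |β - γ| with hδdef
  have hδ : 0 < δ := abs_pos.2 (sub_ne_zero.2 hβγ)
  have hδ1 : δ ≤ 1 := abs_sub_le_iff.2 ⟨by linarith, by linarith⟩
  refine (by positivity : 0 < δ / 4).trans_le (le_dB_of_frequently_le (frequently_atTop.2 ?_))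
  intro N₀
  obtain ⟨J, hJ⟩ := (eventually_add_le_mul_two_pow (p.natAbs + q.natAbs + N₀ + 2)
    (by positivity : 0 < δ / 4)).exists
  have hJnat : p.natAbs + q.natAbs + N₀ + 2 ≤ 2 ^ J := by
    have : (0 : ℝ) ≤ J := J.cast_nonneg
    exact_mod_cast (show ((p.natAbs + q.natAbs + N₀ + 2 : ℕ) : ℝ) ≤ 2 ^ J by push_cast; nlinarith)
  -- In the window `[-n, n]` with `n + 1 = 2 ^ J - 1` a block end, the counts of `o` are those of
  -- `Uprime β` and `Uprime γ` at the block end, moved by at most `|p|` and `|q|`.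
  refine ⟨2 ^ J - 2, by omega, ?_⟩
  have hham := abs_onesCount_sub_le_hamIcc hx hy (n := 2 ^ J - 2) (by omega) (by omega)
  rw [show ((2 ^ J - 2 : ℕ) : ℤ) + 1 = ((2 ^ J - 1 : ℕ) : ℤ) by omega] at hham
  have hgap := le_abs_onesCount_sub_onesCount hβ0 hβ1 hγ0 hγ1 J
  have hp := abs_onesCount_toNat_sub_le β (E := 2 ^ J - 1) (r := p) (by omega)
  have hq := abs_onesCount_toNat_sub_le γ (E := 2 ^ J - 1) (r := q) (by omega)
  have hn : ((2 ^ J - 2 : ℕ) : ℝ) = 2 ^ J - 2 := by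
    rw [Nat.cast_sub (by omega)]; push_cast; ring
  rw [hn, le_div_iff₀ (by nlinarith [one_le_pow₀ (M₀ := ℝ) (a := 2) one_le_two (n := J)])]
  rw [← hδdef] at hgap
  set a := (onesCount β (((2 ^ J - 1 : ℕ) : ℤ) - p).toNat : ℝ)
  set b := (onesCount γ (((2 ^ J - 1 : ℕ) : ℤ) - q).toNat : ℝ)
  set a₀ := (onesCount β (2 ^ J - 1) : ℝ)
  set b₀ := (onesCount γ (2 ^ J - 1) : ℝ)
  have htri : |a₀ - b₀| ≤ |a - b| + |a - a₀| + |b - b₀| :=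
    calc |a₀ - b₀| = |(a - b) - (a - a₀) + (b - b₀)| := by ring_nf
      _ ≤ _ := (abs_add_le _ _).trans (add_le_add_left (abs_sub _ _) _)
  nlinarith

end Estimates

section OrbitClosure

variable {A : Type*}

def orbitClosure (S : Set (ℤ → A)) : Set (ℤ → A) :=
  {x | ∀ N : ℕ, ∃ s ∈ S, ∃ t : ℤ, ∀ i : ℤ, |i| ≤ N → x i = s (i + t)}

lemma translate_mem_orbitClosure {S : Set (ℤ → A)} {s : ℤ → A} (hs : s ∈ S) (t : ℤ) :
    (fun i => s (i + t)) ∈ orbitClosure S :=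
  fun _ => ⟨s, hs, t, fun _ _ => rfl⟩

lemma orbitClosure_translate {S : Set (ℤ → A)} {x : ℤ → A} (hx : x ∈ orbitClosure S) (c : ℤ) :
    (fun i => x (i + c)) ∈ orbitClosure S := by
  intro N
  obtain ⟨s, hs, t, h⟩ := hx (N + c.natAbs)
  refine ⟨s, hs, c + t, fun i hi => ?_⟩
  show x (i + c) = _
  have := le_abs_self c
  have := neg_abs_le c
  rw [h _ (by rw [abs_le] at hi ⊢; push_cast; omega), add_assoc]

lemma isSubshift_orbitClosure (S : Set (ℤ → A)) : IsSubshift (orbitClosure S) := by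
  refine ⟨fun x hx => orbitClosure_translate hx 1, fun x hx => ?_, fun x hx N => ?_⟩
  · simpa only [← sub_eq_add_neg] using orbitClosure_translate hx (-1)
  · obtain ⟨z, hz, hzx⟩ := hx N
    obtain ⟨s, hs, t, h⟩ := hz N
    exact ⟨s, hs, t, fun i hi => (hzx i hi).symm.trans (h i hi)⟩

end OrbitClosure

section Generator

def digit (b : Bool) : Fin 5 := if b then 1 else 0

lemma digit_le_one (b : Bool) : digit b ≤ 1 := by cases b <;> decide

lemma digit_eq_one_iff (b : Bool) : digit b = 1 ↔ b = true := by cases b <;> decide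

/-- The point `∞a b^m c^n w(m/n)`, with the letters `a, b, c` coded by `2, 3, 4`, the binary
digits by `0, 1`, and the block `b^m` starting at the origin. -/
noncomputable def generator (m n : ℕ) : ℤ → Fin 5 := fun j =>
  if j < 0 then 2 else if j < m then 3 else if j < m + n then 4
  else digit (Uprime ((m : ℝ) / n) (j - m - n).toNat)

def generatorShift : Set (ℤ → Fin 5) :=
  orbitClosure (Set.range fun mn : ℕ × ℕ => generator mn.1 mn.2)

lemma generator_eq_two_iff (m n : ℕ) (j : ℤ) : generator m n j = 2 ↔ j < 0 := by
  unfold generator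
  cases Uprime ((m : ℝ) / n) (j - m - n).toNat <;> split_ifs <;> simp [digit] <;> omega

lemma generator_eq_three_iff (m n : ℕ) (j : ℤ) : generator m n j = 3 ↔ 0 ≤ j ∧ j < m := by
  unfold generator
  cases Uprime ((m : ℝ) / n) (j - m - n).toNat <;> split_ifs <;> simp [digit] <;> omega

lemma generator_eq_four_iff (m n : ℕ) (j : ℤ) :
    generator m n j = 4 ↔ m ≤ j ∧ j < m + n := by
  unfold generator
  cases Uprime ((m : ℝ) / n) (j - m - n).toNat <;> split_ifs <;> simp [digit] <;> omega

lemma generator_le_one_iff (m n : ℕ) (j : ℤ) : generator m n j ≤ 1 ↔ m + n ≤ j := by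
  unfold generator
  cases Uprime ((m : ℝ) / n) (j - m - n).toNat <;> split_ifs <;> simp [digit] <;> omega

lemma generator_of_le {m n : ℕ} {j : ℤ} (h : m + n ≤ j) :
    generator m n j = digit (Uprime ((m : ℝ) / n) (j - m - n).toNat) := by
  unfold generator
  split_ifs <;> omega

lemma generator_rigid {m n m' n' : ℕ} {t t' a b : ℤ}
    (h : ∀ i, a ≤ i → i ≤ b → generator m n (i + t) = generator m' n' (i + t'))
    (ha : generator m n (a + t) = 2) (hb : generator m n (b + t) ≤ 1) :
    m = m' ∧ n = n' ∧ t = t' := by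
  have letter : ∀ (c : Fin 5) i, a ≤ i → i ≤ b →
      (generator m n (i + t) = c ↔ generator m' n' (i + t') = c) := fun c i h1 h2 => by
    rw [h i h1 h2]
  rw [generator_eq_two_iff] at ha
  rw [generator_le_one_iff] at hb
  have hab : a ≤ b := by omega
  have ha' := letter 2 a le_rfl hab
  simp only [generator_eq_two_iff] at ha'
  have hb' : m' + n' ≤ b + t' :=
    (generator_le_one_iff _ _ _).1 (h b hab le_rfl ▸ (generator_le_one_iff _ _ _).2 hb)
  have ht := letter 2 (-t) (by omega) (by omega)
  have ht' := letter 2 (-t') (by omega) (by omega)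
  simp only [generator_eq_two_iff] at ht ht'
  obtain rfl : t = t' := by omega
  have hm := letter 3 (min m m' - t) (by omega) (by omega)
  simp only [generator_eq_three_iff] at hm
  obtain rfl : m = m' := by omega
  have hn := letter 4 (m + min n n' - t) (by omega) (by omega)
  simp only [generator_eq_four_iff] at hn
  exact ⟨rfl, by omega, rfl⟩

lemma eq_generator_of_mem_generatorShift {x : ℤ → Fin 5} (hx : x ∈ generatorShift) {a b : ℤ}
    (ha : x a = 2) (hb : x b ≤ 1) : ∃ m n : ℕ, ∃ t : ℤ, x = fun i => generator m n (i + t) := by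
  obtain ⟨_, ⟨⟨m, n⟩, rfl⟩, t, h⟩ := hx (a.natAbs + b.natAbs)
  refine ⟨m, n, t, funext fun i => ?_⟩
  obtain ⟨_, ⟨⟨m', n'⟩, rfl⟩, t', h'⟩ := hx (a.natAbs + b.natAbs + i.natAbs)
  have hagree : ∀ j, a ≤ j → j ≤ b → generator m n (j + t) = generator m' n' (j + t') :=
    fun j _ _ => (h j (by rw [abs_le]; omega)).symm.trans (h' j (by rw [abs_le]; omega))
  obtain ⟨rfl, rfl, rfl⟩ := generator_rigid hagree
    ((h a (by rw [abs_le]; omega)).symm.trans ha) ((h b (by rw [abs_le]; omega)).symm.trans_le hb)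
  exact h' i (by rw [abs_le]; omega)

end Generator

section LimitPoint

/-- The point `∞a.w(α)`, coded as `generator`. -/
noncomputable def limitPoint (α : ℝ) : ℤ → Fin 5 := fun i =>
  if i < 0 then 2 else digit (Uprime α i.toNat)

lemma limitPoint_of_neg (α : ℝ) {i : ℤ} (h : i < 0) : limitPoint α i = 2 := if_pos h

lemma limitPoint_of_nonneg (α : ℝ) {i : ℤ} (h : 0 ≤ i) :
    limitPoint α i = digit (Uprime α i.toNat) := if_neg (not_lt.2 h)

lemma limitPoint_eq_one_iff (α : ℝ) (i : ℤ) :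
    limitPoint α i = 1 ↔ 0 ≤ i ∧ Uprime α i.toNat = true := by
  rcases lt_or_ge i 0 with h | h
  · simp [limitPoint_of_neg α h, h]
  · simp [limitPoint_of_nonneg α h, digit_eq_one_iff, h]

lemma generator_translate_eq_one_iff (m n : ℕ) (t i : ℤ) :
    generator m n (i + t) = 1 ↔
      m + n - t ≤ i ∧ Uprime (min ((m : ℝ) / n) 1) (i - (m + n - t)).toNat = true := by
  rw [Uprime_min_one]
  by_cases h : m + n ≤ i + t
  · rw [generator_of_le h, digit_eq_one_iff, show i + t - m - n = i - (m + n - t) by ring]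
    exact ⟨fun h' => ⟨by omega, h'⟩, And.right⟩
  · have : ¬ generator m n (i + t) ≤ 1 := by rwa [generator_le_one_iff]
    exact ⟨fun h1 => absurd h1.le this, fun h1 => absurd h1.1 (by omega)⟩

lemma dB_limitPoint_pos {α : ℝ} (hα : Irrational α) (hα0 : 0 ≤ α) (hα1 : α ≤ 1)
    {x : ℤ → Fin 5} (hx : x ∈ generatorShift) : 0 < dB x (limitPoint α) := by
  by_cases hneg : ∀ i < 0, x i ≠ 2
  · refine (by norm_num : (0 : ℝ) < 1 / 3).trans_le (one_third_le_dB fun n => ?_)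
    refine le_trans (by simp) (card_le_hamIcc (s := Icc (-(n : ℤ)) (-1))
      (Icc_subset_Icc le_rfl (by omega)) fun i hi => ?_)
    rw [limitPoint_of_neg α (by simp at hi; omega)]
    exact hneg i (by simp at hi; omega)
  push Not at hneg
  obtain ⟨a, -, ha⟩ := hneg
  by_cases hpos : ∀ i ≥ 0, 1 < x i
  · refine (by norm_num : (0 : ℝ) < 1 / 3).trans_le (one_third_le_dB fun n => ?_)
    refine le_trans (by simp) (card_le_hamIcc (s := Icc 0 (n : ℤ))
      (Icc_subset_Icc (by omega) le_rfl) fun i hi => ?_)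
    have hi0 : 0 ≤ i := (mem_Icc.1 hi).1
    rw [limitPoint_of_nonneg α hi0]
    exact ((digit_le_one _).trans_lt (hpos i hi0)).ne'
  push Not at hpos
  obtain ⟨b, -, hb⟩ := hpos
  obtain ⟨m, n, t, rfl⟩ := eq_generator_of_mem_generatorShift hx ha hb
  have hr : min ((m : ℝ) / n) 1 = ((min ((m : ℚ) / n) 1 : ℚ) : ℝ) := by push_cast; rfl
  exact dB_pos_of_Uprime (le_min (by positivity) zero_le_one) (min_le_right _ _) hα0 hα1
    (hr ▸ (hα.ne_rat _).symm) (generator_translate_eq_one_iff m n t) (q := 0)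
    fun i => by simpa using limitPoint_eq_one_iff α i

lemma exists_generator_translate_dB_limitPoint_lt {α : ℝ} (hα0 : 0 ≤ α) (hα1 : α ≤ 1) {ε : ℝ}
    (hε : 0 < ε) : ∃ m n : ℕ, dB (fun i => generator m n (i + (m + n))) (limitPoint α) < ε := by
  obtain ⟨n, hn⟩ := exists_nat_gt (1 / ε)
  have hn0 : (0 : ℝ) < n := (by positivity : (0 : ℝ) < 1 / ε).trans hn
  set m := ⌊α * n⌋₊
  have hle : (m : ℝ) / n ≤ α := div_le_of_le_mul₀ n.cast_nonneg hα0 (Nat.floor_le (by positivity))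
  have hlt : α - m / n < ε := by
    have h1 : α * n < m + 1 := Nat.lt_floor_add_one _
    have h2 : 1 < n * ε := by rwa [div_lt_iff₀ hε] at hn
    refine lt_of_mul_lt_mul_right ?_ hn0.le
    rw [sub_mul, div_mul_cancel₀ _ hn0.ne']
    linarith
  refine ⟨m, n, (dB_le_sub_of_Uprime (by positivity) hle hα1 (m + n) (fun i hi => ?_)
    fun i hi hne heq => hne ?_).trans_lt hlt⟩
  · rw [limitPoint_of_neg α (by omega), (generator_eq_two_iff _ _ _).2 (by omega)]
  · rw [limitPoint_of_nonneg α hi, generator_of_le (by omega), ← heq]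
    ring_nf

end LimitPoint

/-- there is a subshift (over a suitable finite alphabet) whose
Besicovitch projection `X̃` is not `dB`-closed: some `y` satisfies
`d_B(y, X̃) = 0` but `y ∉ X̃`. -/
theorem exists_subshift_tilde_not_closed :
    ∃ (n : ℕ) (X : Set (ℤ → Fin n)), IsSubshift X ∧
      ∃ y : ℤ → Fin n,
        (∀ ε > (0 : ℝ), ∃ z : ℤ → Fin n, (∃ x ∈ X, dB x z = 0) ∧ dB z y < ε) ∧
        ¬ ∃ x ∈ X, dB x y = 0 := by
  have hα : Irrational (√2 - 1) := by simpa using irrational_sqrt_two.sub_natCast 1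
  have hα0 : 0 ≤ √2 - 1 := by linarith [Real.one_lt_sqrt_two]
  have hα1 : √2 - 1 ≤ 1 := by linarith [Real.sqrt_two_lt_three_halves]
  refine ⟨5, generatorShift, isSubshift_orbitClosure _, limitPoint (√2 - 1), fun ε hε => ?_, ?_⟩
  · obtain ⟨m, n, h⟩ := exists_generator_translate_dB_limitPoint_lt hα0 hα1 hε
    exact ⟨_, ⟨_, translate_mem_orbitClosure (Set.mem_range_self (m, n)) _, dB_self _⟩, h⟩
  · rintro ⟨x, hx, h0⟩
    exact (dB_limitPoint_pos hα hα0 hα1 hx).ne' h0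
end

section
/- A cellular automaton f on the full shift Σ^ℤ whose global map is expanding for the Besicovitch pseudometric (d_B(f(x),f(y)) ≥ d_B(x,y) for all x,y) is a Besicovitch isometry, and hence a composition of a shift and a symbol permutation. -/
open Filter

/-! Restricted to configurations of period `2r + 1`, where `r` is the radius of `F`, the automaton
acts as a map `Φ` on the finite Hamming space `A^(ℤ/(2r+1))`, and the Besicovitch distance of two
periodic configurations is their Hamming distance divided by the period. So `Φ` is an expanding
self-map of a finite metric space, hence an isometry: the sum of all distances cannot grow.

Isometries of Hamming space are monomial. Changing the coordinate `c` of `u` changes exactly one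
coordinate of `Φ u`, the same one for every new value (`MapsLineTo`). Comparing the images of the
two paths around a square, obtained by changing two coordinates `c ≠ c'` in either order, shows
that this coordinate `τ c` does not depend on `u`, and `τ` is injective. Hence `(Φ u) j` depends
only on `u (τ⁻¹ j)`.

As the window of the local rule is exactly one period, the local rule is then an injective
function of a single cell, i.e. `F` is a shift followed by a symbol permutation. Such maps
preserve `dB`, since a shift moves the averaging windows by a bounded amount. -/

open Finset Function Filter Topology

section HammingIsometry

variable {ι A : Type*}

def AgreeOff (j : ι) (x y : ι → A) : Prop := ∀ i ≠ j, x i = y i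

theorem agreeOff_refl (j : ι) (x : ι → A) : AgreeOff j x x := fun _ _ => rfl

namespace AgreeOff

variable {j j' k : ι} {x y z : ι → A}

theorem symm (h : AgreeOff j x y) : AgreeOff j y x := fun i hi => (h i hi).symm

theorem trans (h : AgreeOff j x y) (h' : AgreeOff j y z) : AgreeOff j x z :=
  fun i hi => (h i hi).trans (h' i hi)

theorem apply_ne (h : AgreeOff j x y) (hxy : x ≠ y) : x j ≠ y j := fun hj =>
  hxy <| funext fun i => by
    by_cases hi : i = j
    · exact hi ▸ hj
    · exact h i hi

theorem of_triangle (hxy : AgreeOff j x y) (hne : x j ≠ y j) (hxz : AgreeOff j' x z)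
    (hyz : AgreeOff k y z) : AgreeOff j x z := by
  rcases eq_or_ne j' j with rfl | hj'
  · exact hxz
  have hk : k = j := by
    by_contra hk
    exact hne ((hxz j hj'.symm).trans (hyz j (Ne.symm hk)).symm)
  intro i hi
  rcases eq_or_ne i j' with rfl | hij'
  · exact (hxy i hi).trans (hyz i (hk ▸ hi))
  · exact hxz i hij'

end AgreeOff

section Update

variable [DecidableEq ι]

theorem eq_of_forall_update_eq {β : Sort*} {g : (ι → A) → β} (s : Finset ι)
    (hg : ∀ u, ∀ c ∈ s, ∀ b, g (update u c b) = g u) {u v : ι → A}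
    (huv : ∀ i ∉ s, u i = v i) : g u = g v := by
  induction s using Finset.induction_on generalizing u with
  | empty => exact congrArg g (funext fun i => huv i (notMem_empty i))
  | insert c s hc ih =>
    rw [← hg u c (mem_insert_self c s) (v c)]
    refine ih (fun w d hd b => hg w d (mem_insert_of_mem hd) b) fun i hi => ?_
    rcases eq_or_ne i c with rfl | hic
    · exact update_self ..
    · rw [update_of_ne hic]
      exact huv i (by simp [hic, hi])

theorem agreeOff_update (j : ι) (x : ι → A) (b : A) : AgreeOff j x (update x j b) :=
  fun _ hi => (update_of_ne hi _ _).symm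

def MapsLineTo (Φ : (ι → A) → (ι → A)) (u : ι → A) (c j : ι) : Prop :=
  ∀ b, AgreeOff j (Φ u) (Φ (update u c b))

theorem MapsLineTo.update_self {Φ : (ι → A) → (ι → A)} {u : ι → A} {c j : ι}
    (h : MapsLineTo Φ u c j) (b : A) : MapsLineTo Φ (update u c b) c j := fun b' => by
  rw [update_idem]
  exact (h b).symm.trans (h b')

end Update

variable [Fintype ι] [DecidableEq A]

theorem hammingDist_le_one_iff [Nonempty ι] {x y : ι → A} :
    hammingDist x y ≤ 1 ↔ ∃ j, AgreeOff j x y := by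
  rw [hammingDist, card_le_one_iff_subset_singleton]
  refine exists_congr fun j => ⟨fun h i hi => ?_, fun h i hi => ?_⟩
  · by_contra hne
    exact hi (mem_singleton.mp (h (by simpa using hne)))
  · by_contra hij
    exact (mem_filter.mp hi).2 (h i (by simpa using hij))

theorem AgreeOff.eq_of_square {j₁ j₂ k₁ k₂ : ι} {x y₁ y₂ z : ι → A} (h₁ : AgreeOff j₁ x y₁)
    (h₁' : AgreeOff k₁ y₁ z) (h₂ : AgreeOff j₂ x y₂) (h₂' : AgreeOff k₂ y₂ z)
    (hxz : hammingDist x z = 2) (hj : j₁ ≠ j₂) : k₁ = j₂ := by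
  classical
  obtain ⟨p, q, hpq, hD⟩ := card_eq_two.mp hxz
  have hmem : ∀ i, x i ≠ z i → (i = j₁ ∨ i = k₁) ∧ (i = j₂ ∨ i = k₂) := by
    intro i hi
    refine ⟨?_, ?_⟩ <;> by_contra! h
    · exact hi ((h₁ i h.1).trans (h₁' i h.2))
    · exact hi ((h₂ i h.1).trans (h₂' i h.2))
  have hp : p ∈ ({p, q} : Finset ι) := by simp
  have hq : q ∈ ({p, q} : Finset ι) := by simp
  rw [← hD, mem_filter] at hp hq
  have := hmem p hp.2
  have := hmem q hq.2
  grind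

theorem Function.Injective.of_hammingDist_eq {Φ : (ι → A) → (ι → A)}
    (hΦ : ∀ u v, hammingDist (Φ u) (Φ v) = hammingDist u v) : Injective Φ := fun u v h => by
  rw [← hammingDist_eq_zero, ← hΦ, h, hammingDist_self]

variable [DecidableEq ι]

theorem hammingDist_update_update {u : ι → A} {c c' : ι} {b b' : A} (hc : c ≠ c')
    (hb : b ≠ u c) (hb' : b' ≠ u c') : hammingDist (update u c b) (update u c' b') = 2 := by
  rw [hammingDist, card_eq_two]
  refine ⟨c, c', hc, ?_⟩
  ext i
  rcases eq_or_ne i c with rfl | hic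
  · simp [hc, hb]
  rcases eq_or_ne i c' with rfl | hic'
  · simp [hic, hb'.symm]
  · simp [hic, hic']

variable {Φ : (ι → A) → (ι → A)} (hΦ : ∀ u v, hammingDist (Φ u) (Φ v) = hammingDist u v)
include hΦ

theorem exists_mapsLineTo (u : ι → A) (c : ι) : ∃ j, MapsLineTo Φ u c j := by
  have : Nonempty ι := ⟨c⟩
  have hline : ∀ b b', ∃ k, AgreeOff k (Φ (update u c b)) (Φ (update u c b')) := fun b b' => by
    rw [← hammingDist_le_one_iff, hΦ, ← update_idem b b' u, hammingDist_le_one_iff]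
    exact ⟨c, agreeOff_update _ _ _⟩
  by_cases h : ∃ b₁, b₁ ≠ u c
  · obtain ⟨b₁, hb₁⟩ := h
    obtain ⟨j, hj⟩ := hline (u c) b₁
    rw [update_eq_self] at hj
    refine ⟨j, fun b => ?_⟩
    obtain ⟨j', hj'⟩ := hline (u c) b
    obtain ⟨k, hk⟩ := hline b₁ b
    rw [update_eq_self] at hj'
    have hne : Φ u ≠ Φ (update u c b₁) := fun he =>
      hb₁ (by simpa using congrFun (Injective.of_hammingDist_eq hΦ he).symm c)
    exact hj.of_triangle (hj.apply_ne hne) hj' hk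
  · push Not at h
    exact ⟨c, fun b => by rw [h b, update_eq_self]; exact agreeOff_refl _ _⟩

variable [Nontrivial A] {u : ι → A} {c c' j j' : ι}

theorem MapsLineTo.ne (hc : c ≠ c') (h : MapsLineTo Φ u c j) (h' : MapsLineTo Φ u c' j') :
    j ≠ j' := by
  rintro rfl
  obtain ⟨b, hb⟩ := exists_ne (u c)
  obtain ⟨b', hb'⟩ := exists_ne (u c')
  have h2 := hammingDist_update_update hc hb hb'
  have h1 : hammingDist (Φ (update u c b)) (Φ (update u c' b')) ≤ 1 :=
    have : Nonempty ι := ⟨c⟩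
    hammingDist_le_one_iff.mpr ⟨j, (h b).symm.trans (h' b')⟩
  rw [hΦ] at h1
  omega

/-- Compare the images of the two paths `u → update u c' b' → w` and `u → update u c b → w`,
where `w = update (update u c' b') c b`. -/
theorem MapsLineTo.update_of_ne (hc : c ≠ c') (h : MapsLineTo Φ u c j) (b' : A) :
    MapsLineTo Φ (update u c' b') c j := by
  rcases eq_or_ne b' (u c') with rfl | hb'
  · rwa [update_eq_self]
  obtain ⟨b, hb⟩ := exists_ne (u c)
  obtain ⟨k, hk⟩ := exists_mapsLineTo hΦ (update u c' b') c
  obtain ⟨j', hj'⟩ := exists_mapsLineTo hΦ u c'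
  obtain ⟨k', hk'⟩ := exists_mapsLineTo hΦ (update u c b) c'
  have hsq : hammingDist (Φ u) (Φ (update (update u c' b') c b)) = 2 := by
    have h2 := hammingDist_update_update (u := update u c' b') (b := u c') (b' := b) hc.symm
      (by simpa using hb'.symm) (by simpa [hc] using hb)
    rwa [update_idem, update_eq_self, ← hΦ] at h2
  have hkj : k = j := (hj' b').eq_of_square (hk b) (h b)
    (by rw [update_comm hc.symm]; exact hk' b') hsq (hj'.ne hΦ hc.symm h)
  exact hkj ▸ hk

theorem mapsLineTo_update_iff (c' : ι) (b' : A) :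
    MapsLineTo Φ (update u c' b') c j ↔ MapsLineTo Φ u c j := by
  have key : ∀ {v : ι → A} {b : A}, MapsLineTo Φ v c j → MapsLineTo Φ (update v c' b) c j := by
    intro v b h
    rcases eq_or_ne c c' with rfl | hc
    · exact h.update_self b
    · exact h.update_of_ne hΦ hc b
  refine ⟨fun h => ?_, key⟩
  simpa using key (b := u c') h

theorem exists_forall_mapsLineTo (c : ι) : ∃ j, ∀ u, MapsLineTo Φ u c j := by
  let u₀ : ι → A := fun _ => Classical.arbitrary A
  obtain ⟨j, hj⟩ := exists_mapsLineTo hΦ u₀ c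
  refine ⟨j, fun u => ?_⟩
  have := eq_of_forall_update_eq (g := fun v => MapsLineTo Φ v c j) univ
    (fun v c' _ b' => propext (mapsLineTo_update_iff hΦ c' b')) (u := u₀) (v := u) (by simp)
  exact this ▸ hj

omit [Nontrivial A] in
theorem exists_apply_eq_of_hammingDist_eq : ∃ (σ : ι → ι) (G : ι → A → A),
    (∀ j, Injective (G j)) ∧ ∀ u j, Φ u j = G j (u (σ j)) := by
  rcases subsingleton_or_nontrivial A with hA | hA
  · exact ⟨id, fun _ => id, fun _ => injective_id, fun _ _ => Subsingleton.elim _ _⟩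
  choose τ hτ using exists_forall_mapsLineTo hΦ
  let u₀ : ι → A := fun _ => Classical.arbitrary A
  have hτ_inj : Injective τ := fun c c' h => by
    by_contra hc
    exact (hτ c u₀).ne hΦ hc (hτ c' u₀) h
  obtain ⟨σ, hσ⟩ := (Finite.injective_iff_surjective.mp hτ_inj).hasRightInverse
  have hlocal : ∀ u v j, u (σ j) = v (σ j) → Φ u j = Φ v j := fun u v j huv =>
    eq_of_forall_update_eq (g := fun w => Φ w j) (univ.erase (σ j))
      (fun w c hc b => ((hτ c w b) j fun hj => (mem_erase.mp hc).1
        (hτ_inj (by rw [hσ j, hj]))).symm)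
      (fun i hi => by simp_all)
  refine ⟨σ, fun j a => Φ (fun _ => a) j, fun j a a' haa' => ?_, fun u j => hlocal _ _ _ rfl⟩
  have hv : Φ (fun _ => a') j = Φ (update (fun _ => a) (σ j) a') j := hlocal _ _ _ (by simp)
  have hagree := hσ j ▸ hτ (σ j) (fun _ => a) a'
  have := Injective.of_hammingDist_eq hΦ (funext fun i => by
    rcases eq_or_ne i j with rfl | hi
    · exact haa'.trans hv
    · exact hagree i hi)
  simpa using congrFun this (σ j)

end HammingIsometry

theorem eq_of_expanding_of_finite {X : Type*} [Fintype X] {d : X → X → ℕ}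
    (hd : ∀ a b, d a b = 0 ↔ a = b) {Φ : X → X} (hΦ : ∀ a b, d a b ≤ d (Φ a) (Φ b)) (a b : X) :
    d (Φ a) (Φ b) = d a b := by
  have hinj : Injective Φ := fun a b h => by
    have := hΦ a b
    rw [h, (hd _ _).mpr rfl] at this
    exact (hd a b).mp (Nat.le_zero.mp this)
  let e := Equiv.ofBijective Φ hinj.bijective_of_finite
  have hsum : ∑ p : X × X, d (Φ p.1) (Φ p.2) = ∑ p : X × X, d p.1 p.2 :=
    Fintype.sum_equiv (e.prodCongr e) _ _ fun _ => rfl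
  exact ((sum_eq_sum_iff_of_le fun p _ => hΦ p.1 p.2).mp hsum.symm (a, b) (mem_univ _)).symm

section Besicovitch

variable {A : Type*}

theorem hamIcc_eq_card [DecidableEq A] (x y : ℤ → A) (a b : ℤ) :
    hamIcc x y a b = #{i ∈ Icc a b | x i ≠ y i} := by
  unfold hamIcc
  congr

theorem hamIcc_le_card (x y : ℤ → A) (a b : ℤ) : hamIcc x y a b ≤ (b + 1 - a).toNat := by
  classical
  exact (hamIcc_eq_card x y a b).trans_le ((card_filter_le _ _).trans (Int.card_Icc a b).le)

theorem hamIcc_mono (x y : ℤ → A) {a a' b b' : ℤ} (ha : a' ≤ a) (hb : b ≤ b') :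
    hamIcc x y a b ≤ hamIcc x y a' b' := by
  classical
  simp only [hamIcc_eq_card]
  exact card_le_card (filter_subset_filter _ (Icc_subset_Icc ha hb))

theorem hamIcc_le_add (x y : ℤ → A) {a a' b b' : ℤ} (ha : a' ≤ a) (hb : b ≤ b')
    (hab : a ≤ b + 1) :
    (hamIcc x y a' b' : ℤ) ≤ hamIcc x y a b + (a - a') + (b' - b) := by
  classical
  simp only [hamIcc_eq_card]
  have hsub : Icc a b ⊆ Icc a' b' := Icc_subset_Icc ha hb
  have h1 := card_le_card_sdiff_add_card (s := {i ∈ Icc a' b' | x i ≠ y i})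
    (t := {i ∈ Icc a b | x i ≠ y i})
  have h2 : #({i ∈ Icc a' b' | x i ≠ y i} \ {i ∈ Icc a b | x i ≠ y i}) ≤ #(Icc a' b' \ Icc a b) :=
    card_le_card fun i => by simp +contextual
  rw [card_sdiff_of_subset hsub, Int.card_Icc, Int.card_Icc] at h2
  omega

theorem hamIcc_add_hamIcc (x y : ℤ → A) {a b c : ℤ} (hab : a ≤ b + 1) (hbc : b ≤ c) :
    hamIcc x y a b + hamIcc x y (b + 1) c = hamIcc x y a c := by
  classical
  simp only [hamIcc_eq_card]
  rw [← card_union_of_disjoint (disjoint_filter_filter (disjoint_left.mpr fun i h h' => by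
    simp only [mem_Icc] at h h'; omega)), ← filter_union]
  congr 1
  ext i
  simp only [mem_filter, mem_union, mem_Icc]
  exact and_congr_left fun _ => by omega

theorem hamIcc_comp_add (x y : ℤ → A) (n a b : ℤ) :
    hamIcc (fun i => x (i + n)) (fun i => y (i + n)) a b = hamIcc x y (a + n) (b + n) := by
  classical
  simp only [hamIcc_eq_card]
  refine card_nbij' (· + n) (· - n) ?_ ?_ ?_ ?_ <;> intro i hi <;>
    simp only [coe_filter, Set.mem_ofPred_eq, mem_Icc, sub_add_cancel, add_sub_cancel_right] at hi ⊢
  · exact ⟨⟨by omega, by omega⟩, hi.2⟩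
  · exact ⟨⟨by omega, by omega⟩, hi.2⟩

theorem hamIcc_comp_injective {g : A → A} (hg : Injective g) (x y : ℤ → A) (a b : ℤ) :
    hamIcc (fun i => g (x i)) (fun i => g (y i)) a b = hamIcc x y a b := by
  classical
  simp only [hamIcc_eq_card, hg.ne_iff]

theorem abs_hamIcc_add_sub_le (x y : ℤ → A) {a b : ℤ} (n : ℤ) (hab : a ≤ b + 1) :
    |(hamIcc x y (a + n) (b + n) : ℤ) - hamIcc x y a b| ≤ 2 * |n| := by
  have hn := abs_nonneg n
  have hn' := le_abs_self n
  have hn'' := neg_abs_le n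
  have h₁ := hamIcc_mono x y (a := a + n) (a' := a - |n|) (b := b + n) (b' := b + |n|)
    (by omega) (by omega)
  have h₂ := hamIcc_le_add x y (a := a) (a' := a - |n|) (b := b) (b' := b + |n|)
    (by omega) (by omega) hab
  have h₃ := hamIcc_mono x y (a := a) (a' := a - |n|) (b := b) (b' := b + |n|) (by omega) (by omega)
  have h₄ := hamIcc_le_add x y (a := a + n) (a' := a - |n|) (b := b + n) (b' := b + |n|)
    (by omega) (by omega) (by omega)
  rw [abs_le]
  constructor <;> omega

theorem limsup_le_limsup_of_tendsto_sub {ι : Type*} {f : Filter ι} [f.NeBot] {u v : ι → ℝ}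
    (hv : IsBoundedUnder (· ≤ ·) f v) (hv' : IsBoundedUnder (· ≥ ·) f v)
    (h : Tendsto (u - v) f (𝓝 0)) : limsup u f ≤ limsup v f :=
  calc limsup u f = limsup (v + (u - v)) f := by rw [add_sub_cancel]
    _ ≤ limsup v f + limsup (u - v) f :=
      limsup_add_le hv' hv h.isBoundedUnder_ge.isCoboundedUnder_le h.isBoundedUnder_le
    _ = limsup v f := by rw [h.limsup_eq, add_zero]

theorem tendsto_div_two_mul_add_one_of_abs_le {e : ℕ → ℝ} {C : ℝ} (h : ∀ n, |e n| ≤ C) :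
    Tendsto (fun n : ℕ => e n / (2 * n + 1)) atTop (𝓝 0) := by
  refine squeeze_zero_norm (fun n => ?_) ((tendsto_const_nhds (x := C)).div_atTop
    (tendsto_atTop_add_const_right _ 1 (tendsto_natCast_atTop_atTop.const_mul_atTop two_pos)))
  rw [Real.norm_eq_abs, abs_div, abs_of_pos (by positivity : (0 : ℝ) < 2 * n + 1)]
  exact div_le_div_of_nonneg_right (h n) (by positivity)

theorem hamIcc_div_mem_Icc (x y : ℤ → A) (n : ℕ) :
    (hamIcc x y (-n) n : ℝ) / (2 * n + 1) ∈ Set.Icc 0 1 := by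
  refine ⟨by positivity, (div_le_one (by positivity)).mpr ?_⟩
  have := hamIcc_le_card x y (-n) n
  rw [show ((n : ℤ) + 1 - -n).toNat = 2 * n + 1 by omega] at this
  exact_mod_cast this

theorem dB_le_dB_of_abs_hamIcc_sub_le {x y x' y' : ℤ → A} (C : ℝ)
    (h : ∀ n : ℕ, |(hamIcc x' y' (-n) n : ℝ) - hamIcc x y (-n) n| ≤ C) : dB x' y' ≤ dB x y := by
  refine limsup_le_limsup_of_tendsto_sub
    (isBoundedUnder_of ⟨1, fun n => (hamIcc_div_mem_Icc x y n).2⟩)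
    (isBoundedUnder_of ⟨0, fun n => (hamIcc_div_mem_Icc x y n).1⟩) ?_
  convert tendsto_div_two_mul_add_one_of_abs_le h using 2 with n
  simp only [Pi.sub_apply, sub_div]

theorem dB_comp_add (x y : ℤ → A) (n : ℤ) :
    dB (fun i => x (i + n)) (fun i => y (i + n)) = dB x y := by
  have h : ∀ k : ℕ, |(hamIcc x y (-k + n) (k + n) : ℝ) - hamIcc x y (-k) k| ≤ 2 * |n| :=
    fun k => by exact_mod_cast abs_hamIcc_add_sub_le x y n (by omega)
  refine le_antisymm (dB_le_dB_of_abs_hamIcc_sub_le (2 * |n|) fun k => ?_)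
    (dB_le_dB_of_abs_hamIcc_sub_le (2 * |n|) fun k => ?_)
  · rw [hamIcc_comp_add]
    exact h k
  · rw [hamIcc_comp_add, abs_sub_comm]
    exact h k

theorem dB_comp_injective {g : A → A} (hg : Injective g) (x y : ℤ → A) :
    dB (fun i => g (x i)) (fun i => g (y i)) = dB x y := by
  simp only [dB, hamIcc_comp_injective hg]

end Besicovitch

section Periodic

variable {A : Type*} {N : ℕ}

def periodize (u : ZMod N → A) : ℤ → A := fun i => u i

variable [NeZero N] [DecidableEq A]

theorem hamIcc_periodize_period (u v : ZMod N → A) (a : ℤ) :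
    hamIcc (periodize u) (periodize v) a (a + N - 1) = hammingDist u v := by
  rw [hamIcc_eq_card, hammingDist]
  have hN : (0 : ℤ) < N := by exact_mod_cast NeZero.pos N
  refine card_nbij' (fun i => (i : ZMod N)) (fun c => a + (c - a).val) ?_ ?_ ?_ ?_
  · intro i hi
    rw [mem_coe, mem_filter] at hi
    simpa [periodize] using hi.2
  · intro c hc
    have hlt := ZMod.val_lt (c - (a : ZMod N))
    have hcast : ((a + (c - a).val : ℤ) : ZMod N) = c := by push_cast; simp
    rw [mem_coe, mem_filter] at hc ⊢
    dsimp only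
    refine ⟨mem_Icc.mpr ⟨by omega, by omega⟩, ?_⟩
    simpa [periodize, hcast] using hc
  · intro i hi
    rw [mem_coe, mem_filter, mem_Icc] at hi
    have : (((i : ZMod N) - a).val : ℤ) = i - a := by
      rw [← Int.cast_sub, ZMod.val_intCast, Int.emod_eq_of_lt (by omega) (by omega)]
    simp only [this]
    ring
  · intro c _
    push_cast
    simp

theorem abs_hamIcc_periodize_sub_le (u v : ZMod N → A) (L : ℕ) (a : ℤ) :
    |(N : ℤ) * hamIcc (periodize u) (periodize v) a (a + L - 1) - L * hammingDist u v| ≤ N * N := by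
  induction L using Nat.strong_induction_on generalizing a with
  | _ L ih =>
    have hH : hammingDist u v ≤ N := by simpa using hammingDist_le_card_fintype (x := u) (y := v)
    rcases lt_or_ge L N with hL | hL
    · have hc := hamIcc_le_card (periodize u) (periodize v) a (a + L - 1)
      rw [show (a + L - 1 + 1 - a).toNat = L by omega] at hc
      rw [abs_le]
      constructor <;> nlinarith
    -- one more period adds `hammingDist u v` to the count, so the error is periodic in `L`
    · obtain ⟨L, rfl⟩ : ∃ L', L = L' + N := ⟨L - N, by omega⟩
      have h := ih L (by have := NeZero.pos N; omega) (a + N)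
      rw [← hamIcc_add_hamIcc _ _ (b := a + N - 1) (by omega) (by omega), hamIcc_periodize_period,
        show a + N - 1 + 1 = a + N by ring, show a + ↑(L + N) - 1 = a + N + L - 1 by push_cast; ring]
      convert h using 2
      push_cast
      ring

theorem dB_periodize (u v : ZMod N → A) :
    dB (periodize u) (periodize v) = hammingDist u v / N := by
  have hN : (0 : ℝ) < N := by exact_mod_cast NeZero.pos N
  have key : ∀ n : ℕ, |(hamIcc (periodize u) (periodize v) (-n) n : ℝ) -
      (2 * n + 1) * (hammingDist u v / N)| ≤ N := fun n => by
    have h := abs_hamIcc_periodize_sub_le u v (2 * n + 1) (-n)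
    rw [show -(n : ℤ) + ((2 * n + 1 : ℕ) : ℤ) - 1 = n by push_cast; ring] at h
    have h' : |(N : ℝ) * hamIcc (periodize u) (periodize v) (-n) n - (2 * n + 1) * hammingDist u v|
        ≤ N * N := by exact_mod_cast h
    have hdiv : (hamIcc (periodize u) (periodize v) (-n) n : ℝ) - (2 * n + 1) *
        (hammingDist u v / N) = (N * hamIcc (periodize u) (periodize v) (-n) n -
        (2 * n + 1) * hammingDist u v) / N := by field_simp
    rwa [hdiv, abs_div, abs_of_pos hN, div_le_iff₀ hN]
  refine Tendsto.limsup_eq ?_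
  convert (tendsto_div_two_mul_add_one_of_abs_le key).const_add ((hammingDist u v : ℝ) / N)
    using 2 with n
  · field_simp
    ring
  · simp

end Periodic

section CyclicCA

variable {A : Type*} {N : ℕ}

def cyclicCA (r : ℕ) (f : (Fin (2 * r + 1) → A) → A) (u : ZMod N → A) : ZMod N → A :=
  fun c => f fun k => u (c - r + k)

theorem map_periodize {F : (ℤ → A) → (ℤ → A)} {r : ℕ} {f : (Fin (2 * r + 1) → A) → A}
    (hF : ∀ x i, F x i = f fun j => x (i - r + j)) (u : ZMod N → A) :
    F (periodize u) = periodize (cyclicCA r f u) := by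
  funext i
  simp only [hF, periodize, cyclicCA]
  push_cast
  rfl

theorem exists_eq_apply_of_cyclicCA_isometry [DecidableEq A] {r : ℕ}
    {f : (Fin (2 * r + 1) → A) → A}
    (hf : ∀ u v : ZMod (2 * r + 1) → A,
      hammingDist (cyclicCA r f u) (cyclicCA r f v) = hammingDist u v) :
    ∃ (k : Fin (2 * r + 1)) (g : A → A), Injective g ∧ ∀ w, f w = g (w k) := by
  obtain ⟨σ, G, hG, hΦ⟩ := exists_apply_eq_of_hammingDist_eq hf
  let idx : ZMod (2 * r + 1) → Fin (2 * r + 1) := fun c => ⟨(c + r).val, ZMod.val_lt _⟩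
  refine ⟨idx (σ 0), G 0, hG 0, fun w => ?_⟩
  have hw : cyclicCA r f (fun c => w (idx c)) 0 = f w := by
    simp only [cyclicCA, idx]
    congr
    funext k
    refine congrArg w (Fin.ext ?_)
    simp [ZMod.val_natCast, Nat.mod_eq_of_lt k.isLt]
  rw [← hw, hΦ]

end CyclicCA

/-- a CA on the full shift which is `dB`-expanding is a `dB`-isometry,
hence a composition of a power of the shift and a symbol permutation. -/
theorem expanding_ca_is_isometry {A : Type*} [Fintype A]
    (F : (ℤ → A) → (ℤ → A)) (hCA : IsSlidingBlock F)
    (hexp : ∀ x y : ℤ → A, dB x y ≤ dB (F x) (F y)) :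
    (∀ x y : ℤ → A, dB (F x) (F y) = dB x y) ∧
    ∃ (n : ℤ) (g : A → A), Function.Bijective g ∧ ∀ x i, F x i = g (x (i + n)) := by
  classical
  obtain ⟨r, f, hF⟩ := hCA
  have hiso : ∀ u v : ZMod (2 * r + 1) → A,
      hammingDist (cyclicCA r f u) (cyclicCA r f v) = hammingDist u v :=
    eq_of_expanding_of_finite (fun _ _ => hammingDist_eq_zero) fun u v => by
      have h := hexp (periodize u) (periodize v)
      rwa [map_periodize hF, map_periodize hF, dB_periodize, dB_periodize,
        div_le_div_iff_of_pos_right (by positivity), Nat.cast_le] at h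
  obtain ⟨k, g, hg, hf⟩ := exists_eq_apply_of_cyclicCA_isometry hiso
  have hFg : ∀ x i, F x i = g (x (i + (k - r))) := fun x i => by
    rw [hF, hf]
    congr 2
    ring
  refine ⟨fun x y => ?_, k - r, g, hg.bijective_of_finite, hFg⟩
  rw [funext (hFg x), funext (hFg y),
    dB_comp_injective hg (fun i => x (i + _)) (fun i => y (i + _)), dB_comp_add]
end
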